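/- If Pₖ = c + r·rₖ + (1/2)(c² + r² + 2r c·rₖ)n + n̄ with unit vectors rₖ (k = 1,2,3) and circle-plane bivector I_c = (p₁−p₂)∧(p₂−p₃) where pₖ = c + r·rₖ, then P₁∧P₂∧P₃ = c∧I_c + [(1/2)(r²+c²)I_c − c(c⌋I_c)]n + I_c n̄ − (c⌋I_c)N. -/

import Mathlib

noncomputable section
open scoped RealInnerProductSpace

/-- Euclidean 3-space. -/
abbrev E3 : Type := EuclideanSpace ℝ (Fin 3)

/-- The 5-dimensional space ℝ^{4,1}: Euclidean part plus coefficients of the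
null vectors n (infinity) and n̄ (origin). -/
abbrev V5 : Type := E3 × ℝ × ℝ

/-- Symmetric bilinear form of signature (4,1):
`⟪p,q⟫` on the Euclidean part, and `n·n̄ = -1` on the null pair. -/
def B5 : LinearMap.BilinForm ℝ V5 := LinearMap.mk₂ ℝ
  (fun x y => ⟪x.1, y.1⟫ - x.2.1 * y.2.2 - x.2.2 * y.2.1)
  (fun m₁ m₂ y => by simp only [Prod.fst_add, Prod.snd_add, inner_add_left]; ring)
  (fun c m y => by simp only [Prod.smul_fst, Prod.smul_snd, smul_eq_mul, real_inner_smul_left]; ring)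
  (fun m y₁ y₂ => by simp only [Prod.fst_add, Prod.snd_add, inner_add_right]; ring)
  (fun c m y => by simp only [Prod.smul_fst, Prod.smul_snd, smul_eq_mul, real_inner_smul_right]; ring)

/-- The quadratic form of R_{4,1}. -/
def Q5 : QuadraticForm ℝ V5 := B5.toQuadraticMap

/-- The Clifford geometric algebra R_{4,1}. -/
abbrev Cl : Type := CliffordAlgebra Q5

def ι5 : V5 →ₗ[ℝ] Cl := CliffordAlgebra.ι Q5

/-- Embedding of a Euclidean vector as a grade-1 element. -/
def ev (p : E3) : Cl := ι5 (p, 0, 0)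

/-- The null vector n representing infinity. -/
def nInf : Cl := ι5 (0, 1, 0)

/-- The null vector n̄ representing the origin. -/
def nOri : Cl := ι5 (0, 0, 1)

/-- The conformal point P = p + (1/2)p² n + n̄. -/
def cpt (p : E3) : Cl := ι5 (p, ⟪p, p⟫ / 2, 1)

/-- Outer (wedge) product of two vectors (grade-1 elements): antisymmetrized
geometric product. -/
def w2 (a b : Cl) : Cl := (2:ℝ)⁻¹ • (a * b - b * a)

/-- Outer (wedge) product of three vectors. -/
def w3 (a b c : Cl) : Cl := (6:ℝ)⁻¹ •
  (a*b*c - a*c*b - b*a*c + b*c*a + c*a*b - c*b*a)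

/-- Outer (wedge) product of a vector with a bivector. -/
def vwB (v B : Cl) : Cl := (2:ℝ)⁻¹ • (v * B + B * v)

/-- Left contraction of a vector into a bivector. -/
def lcontr (v B : Cl) : Cl := (2:ℝ)⁻¹ • (v * B - B * v)

/-- The Minkowski plane bivector N = n ∧ n̄. -/
def Nb : Cl := w2 nInf nOri

/-!
Translation by `c` is an isometry of `R_{4,1}` fixing `n`, so it induces an algebra automorphism
of the Clifford algebra which sends the conformal point of `q` to that of `c + q`; this reduces the
claim to the circle of radius `r` centred at the origin. There every `Pₖ` is `r rₖ + K` with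
`K = ½ r² n + n̄` orthogonal to Euclidean space, so alternation gives
`P₁ ∧ P₂ ∧ P₃ = (r r₁ + K) ∧ I_c = I_c K`, the term `r₁ ∧ I_c` vanishing because `r₁` lies in the
plane of `I_c`. Translating back sends `n̄` to the conformal point of `c` and `I_c` to
`I_c - (c⌋I_c) n`, and expanding the product with `n² = 0`, `n n̄ = N - 1` and
`c (c⌋I_c) = -(c⌋I_c) c` gives the formula.
-/

lemma B5_apply (x y : V5) : B5 x y = ⟪x.1, y.1⟫ - x.2.1 * y.2.2 - x.2.2 * y.2.1 := rfl

lemma B5_comm (x y : V5) : B5 x y = B5 y x := by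
  simp only [B5_apply, real_inner_comm]; ring

lemma ι5_mul_ι5_add_swap (x y : V5) : ι5 x * ι5 y + ι5 y * ι5 x = (2 * B5 x y) • (1 : Cl) := by
  rw [ι5, CliffordAlgebra.ι_mul_ι_add_swap, Algebra.algebraMap_eq_smul_one]
  congr 1
  exact (LinearMap.BilinMap.polar_toQuadraticMap (B := B5) x y).trans (by rw [B5_comm y x, two_mul])

lemma ι5_mul_ι5_self (x : V5) : ι5 x * ι5 x = B5 x x • (1 : Cl) := by
  rw [ι5, CliffordAlgebra.ι_sq_scalar, Algebra.algebraMap_eq_smul_one]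
  rfl

lemma ι5_mk (x : E3) (a b : ℝ) : ι5 (x, a, b) = ev x + a • nInf + b • nOri := by
  simp only [ev, nInf, nOri, ← map_smul, ← map_add, Prod.smul_mk, Prod.mk_add_mk]
  congr 2 <;> simp

lemma ev_sub (x y : E3) : ev (x - y) = ev x - ev y := by
  simp only [ev, ← map_sub, Prod.mk_sub_mk, sub_zero]

lemma ev_smul (t : ℝ) (x : E3) : ev (t • x) = t • ev x := by
  simp only [ev, ← map_smul, Prod.smul_mk, smul_zero]

lemma w3_eq_w3_sub_sub (a b d : Cl) : w3 a b d = w3 a (a - b) (b - d) := by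
  simp only [w3]; congr 1; noncomm_ring

lemma w3_add_left (a a' b d : Cl) : w3 (a + a') b d = w3 a b d + w3 a' b d := by
  simp only [w3, ← smul_add]; congr 1; noncomm_ring

lemma vwB_smul_left (t : ℝ) (a B : Cl) : vwB (t • a) B = t • vwB a B := by
  simp only [vwB, smul_mul_assoc, mul_smul_comm, ← smul_add, smul_comm t]

lemma vwB_sub_lcontr (a B : Cl) : vwB a B - lcontr a B = B * a := by
  simp only [vwB, lcontr, ← smul_sub]; module

lemma vwB_eq_mul_of_commute {a B : Cl} (h : Commute a B) : vwB a B = B * a := by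
  rw [vwB, h.eq]; module

lemma map_w2 (f : Cl →ₐ[ℝ] Cl) (a b : Cl) : f (w2 a b) = w2 (f a) (f b) := by
  simp only [w2, map_smul, map_sub, map_mul]

lemma map_w3 (f : Cl →ₐ[ℝ] Cl) (a b d : Cl) : f (w3 a b d) = w3 (f a) (f b) (f d) := by
  simp only [w3, map_smul, map_sub, map_add, map_mul]

lemma w3_ι5 (x y z : V5) : w3 (ι5 x) (ι5 y) (ι5 z) = vwB (ι5 x) (w2 (ι5 y) (ι5 z)) := by
  have hxz := ι5_mul_ι5_add_swap x z
  have hyz := ι5_mul_ι5_add_swap y z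
  linear_combination (norm := skip) (-1/12 : ℝ) •
    (ι5 x * hyz - hyz * ι5 x + (2:ℝ) • (ι5 y * hxz) - (2:ℝ) • (hxz * ι5 y))
  simp only [w3, vwB, w2, mul_sub, sub_mul, mul_add, add_mul, smul_mul_assoc, mul_smul_comm,
    mul_assoc, one_mul, mul_one]
  module

lemma lcontr_ι5_w2 (x y z : V5) :
    lcontr (ι5 x) (w2 (ι5 y) (ι5 z)) = B5 x y • ι5 z - B5 x z • ι5 y := by
  have hxy := ι5_mul_ι5_add_swap x y
  have hxz := ι5_mul_ι5_add_swap x z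
  linear_combination (norm := skip) (1/4 : ℝ) •
    (hxy * ι5 z + ι5 z * hxy - ι5 y * hxz - hxz * ι5 y)
  simp only [lcontr, w2, mul_sub, sub_mul, mul_add, add_mul, smul_mul_assoc, mul_smul_comm,
    mul_assoc, one_mul, mul_one]
  module

lemma commute_ι5_w2_of_B5_eq_zero {x y z : V5} (hy : B5 x y = 0) (hz : B5 x z = 0) :
    Commute (ι5 x) (w2 (ι5 y) (ι5 z)) := by
  have h := lcontr_ι5_w2 x y z
  rw [hy, hz, zero_smul, zero_smul, sub_zero, lcontr, smul_eq_zero] at h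
  exact sub_eq_zero.mp (h.resolve_left (by norm_num))

lemma ι5_mul_lcontr_add_swap (x : V5) (B : Cl) :
    ι5 x * lcontr (ι5 x) B + lcontr (ι5 x) B * ι5 x = 0 := by
  have hxx := ι5_mul_ι5_self x
  linear_combination (norm := skip) (1/2 : ℝ) • (hxx * B - B * hxx)
  simp only [lcontr, mul_sub, sub_mul, smul_mul_assoc, mul_smul_comm, mul_assoc, one_mul, mul_one]
  module

lemma nInf_mul_ev (x : E3) : nInf * ev x = -(ev x * nInf) :=
  eq_neg_of_add_eq_zero_left <| by simp [nInf, ev, ι5_mul_ι5_add_swap, B5_apply]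

lemma nInf_mul_nInf : nInf * nInf = 0 := by
  simp [nInf, ι5_mul_ι5_self, B5_apply]

lemma nInf_mul_nOri_add_swap : nInf * nOri + nOri * nInf = (-2 : ℝ) • (1 : Cl) := by
  simp [nInf, nOri, ι5_mul_ι5_add_swap, B5_apply]

-- `x ↦ x + (c·x) n`, `n ↦ n`, `n̄ ↦ c + ½ c² n + n̄`, in the coordinates `x + a n + b n̄` of `V5`.
def translationIsometry (c : E3) : Q5 →qᵢ Q5 where
  toFun x := (x.1 + x.2.2 • c, x.2.1 + ⟪c, x.1⟫ + x.2.2 * (⟪c, c⟫ / 2), x.2.2)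
  map_add' x y := by
    simp only [Prod.fst_add, Prod.snd_add, add_smul, inner_add_right, Prod.mk_add_mk]
    congr 1
    · abel
    · congr 1; ring
  map_smul' t x := by
    simp only [Prod.smul_fst, Prod.smul_snd, smul_eq_mul, mul_smul, real_inner_smul_right,
      RingHom.id_apply, Prod.smul_mk, smul_add, mul_add, mul_assoc]
  map_app' x := by
    change B5 _ _ = B5 x x
    simp only [B5_apply, inner_add_left, inner_add_right, real_inner_smul_left,
      real_inner_smul_right, real_inner_comm x.1 c]
    ring

def translation (c : E3) : Cl →ₐ[ℝ] Cl := CliffordAlgebra.map (translationIsometry c)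

lemma translation_ι5 (c x : E3) (a b : ℝ) :
    translation c (ι5 (x, a, b)) = ι5 (x + b • c, a + ⟪c, x⟫ + b * (⟪c, c⟫ / 2), b) :=
  CliffordAlgebra.map_apply_ι _ _

lemma translation_ev (c x : E3) : translation c (ev x) = ev x + ⟪c, x⟫ • nInf := by
  rw [ev, translation_ι5, ι5_mk]; simp [ev]

lemma translation_cpt (c q : E3) : translation c (cpt q) = cpt (c + q) := by
  rw [cpt, cpt, translation_ι5, one_smul, one_mul, add_comm q c]
  congr 3
  simp only [inner_add_left, inner_add_right, real_inner_comm q c]; ring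

lemma translation_w2_ev (c u v : E3) :
    translation c (w2 (ev u) (ev v)) =
      w2 (ev u) (ev v) - lcontr (ev c) (w2 (ev u) (ev v)) * nInf := by
  have hL : lcontr (ev c) (w2 (ev u) (ev v)) = ⟪c, u⟫ • ev v - ⟪c, v⟫ • ev u := by
    have h := lcontr_ι5_w2 (c, 0, 0) (u, 0, 0) (v, 0, 0)
    simp only [B5_apply, mul_zero, sub_zero] at h
    exact h
  rw [map_w2, translation_ev, translation_ev, hL]
  linear_combination (norm := skip)
    (⟪c, u⟫ / 2) • nInf_mul_ev v - (⟪c, v⟫ / 2) • nInf_mul_ev u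
  simp only [w2, sub_mul, mul_add, add_mul, smul_mul_assoc, mul_smul_comm]
  module

lemma w3_cpt_of_inner_self_eq {ρ : ℝ} {q₁ q₂ q₃ : E3} (h₁ : ⟪q₁, q₁⟫ = ρ) (h₂ : ⟪q₂, q₂⟫ = ρ)
    (h₃ : ⟪q₃, q₃⟫ = ρ) :
    w3 (cpt q₁) (cpt q₂) (cpt q₃) =
      vwB (ev q₁) (w2 (ev (q₁ - q₂)) (ev (q₂ - q₃)))
        + w2 (ev (q₁ - q₂)) (ev (q₂ - q₃)) * ι5 (0, ρ / 2, 1) := by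
  have hcpt : ∀ q : E3, ⟪q, q⟫ = ρ → cpt q = ev q + ι5 (0, ρ / 2, 1) := by
    intro q hq
    rw [cpt, hq, ev, ← map_add]
    simp
  have hK : Commute (ι5 (0, ρ / 2, 1)) (w2 (ev (q₁ - q₂)) (ev (q₂ - q₃))) :=
    commute_ι5_w2_of_B5_eq_zero (by simp [B5_apply]) (by simp [B5_apply])
  rw [hcpt q₁ h₁, hcpt q₂ h₂, hcpt q₃ h₃, w3_eq_w3_sub_sub, add_sub_add_right_eq_sub,
    add_sub_add_right_eq_sub, ← ev_sub, ← ev_sub, w3_add_left, ← vwB_eq_mul_of_commute hK]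
  simp only [ev, w3_ι5]

lemma sub_lcontr_mul_nInf_mul_ι5 (c : E3) (ρ : ℝ) (I : Cl) :
    (I - lcontr (ev c) I * nInf) * ι5 (c, ρ / 2 + ⟪c, c⟫ / 2, 1) =
      vwB (ev c) I
      + ((2:ℝ)⁻¹ • ((ρ + ⟪c, c⟫) • I) - ev c * lcontr (ev c) I) * nInf
      + I * nOri
      - lcontr (ev c) I * Nb := by
  have hcL : ev c * lcontr (ev c) I + lcontr (ev c) I * ev c = 0 :=
    ι5_mul_lcontr_add_swap (c, 0, 0) I
  rw [ι5_mk]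
  linear_combination (norm := skip)
    -vwB_sub_lcontr (ev c) I - lcontr (ev c) I * nInf_mul_ev c + hcL * nInf
      - (ρ / 2 + ⟪c, c⟫ / 2) • (lcontr (ev c) I * nInf_mul_nInf)
      - (1/2 : ℝ) • (lcontr (ev c) I * nInf_mul_nOri_add_swap)
  simp only [Nb, w2, mul_sub, sub_mul, mul_add, add_mul, smul_mul_assoc, mul_smul_comm, mul_assoc,
    mul_one, mul_neg, mul_zero, zero_mul]
  module

theorem circle_trivector_center_radius_general
    (c : E3) (r : ℝ)
    (r₁ r₂ r₃ : E3) (h₁ : ‖r₁‖ = 1) (h₂ : ‖r₂‖ = 1) (h₃ : ‖r₃‖ = 1)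
    (p₁ p₂ p₃ : E3)
    (hp₁ : p₁ = c + r • r₁) (hp₂ : p₂ = c + r • r₂) (hp₃ : p₃ = c + r • r₃)
    (Ic : Cl) (hIc : Ic = w2 (ev (p₁ - p₂)) (ev (p₂ - p₃)))
    (hin₁ : vwB (ev r₁) Ic = 0)
 :
    w3 (cpt p₁) (cpt p₂) (cpt p₃) =
      vwB (ev c) Ic
      + ((2:ℝ)⁻¹ • ((r ^ 2 + ⟪c, c⟫) • Ic) - ev c * lcontr (ev c) Ic) * nInf
      + Ic * nOri
      - lcontr (ev c) Ic * Nb := by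
  have hsphere : ∀ x : E3, ‖x‖ = 1 → ⟪r • x, r • x⟫ = r ^ 2 := fun x hx => by
    rw [real_inner_self_eq_norm_sq, norm_smul, hx, mul_one, Real.norm_eq_abs, sq_abs]
  have hIc' : Ic = w2 (ev (r • r₁ - r • r₂)) (ev (r • r₂ - r • r₃)) := by
    rw [hIc, hp₁, hp₂, hp₃, add_sub_add_left_eq_sub, add_sub_add_left_eq_sub]
  have hplane : vwB (ev (r • r₁)) Ic = 0 := by rw [ev_smul, vwB_smul_left, hin₁, smul_zero]
  calc w3 (cpt p₁) (cpt p₂) (cpt p₃)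
      = translation c (w3 (cpt (r • r₁)) (cpt (r • r₂)) (cpt (r • r₃))) := by
        rw [map_w3, translation_cpt, translation_cpt, translation_cpt, hp₁, hp₂, hp₃]
    _ = translation c (Ic * ι5 (0, r ^ 2 / 2, 1)) := by
        rw [w3_cpt_of_inner_self_eq (hsphere r₁ h₁) (hsphere r₂ h₂) (hsphere r₃ h₃), ← hIc',
          hplane, zero_add]
    _ = (Ic - lcontr (ev c) Ic * nInf) * ι5 (c, r ^ 2 / 2 + ⟪c, c⟫ / 2, 1) := by
        rw [map_mul, translation_ι5, hIc', translation_w2_ev]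
        simp
    _ = _ := sub_lcontr_mul_nInf_mul_ι5 c (r ^ 2) Ic

/-- the circle trivector in terms of center c, radius r and
circle-plane bivector I_c. -/
theorem circle_trivector_center_radius
    (c : E3) (r : ℝ) (hr : 0 < r)
    (r₁ r₂ r₃ : E3) (h₁ : ‖r₁‖ = 1) (h₂ : ‖r₂‖ = 1) (h₃ : ‖r₃‖ = 1)
    (p₁ p₂ p₃ : E3)
    (hp₁ : p₁ = c + r • r₁) (hp₂ : p₂ = c + r • r₂) (hp₃ : p₃ = c + r • r₃)
    (Ic : Cl) (hIc : Ic = w2 (ev (p₁ - p₂)) (ev (p₂ - p₃)))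
    (hin₁ : vwB (ev r₁) Ic = 0) (hin₂ : vwB (ev r₂) Ic = 0)
    (hin₃ : vwB (ev r₃) Ic = 0)
 :
    w3 (cpt p₁) (cpt p₂) (cpt p₃) =
      vwB (ev c) Ic
      + ((2:ℝ)⁻¹ • ((r ^ 2 + ⟪c, c⟫) • Ic) - ev c * lcontr (ev c) Ic) * nInf
      + Ic * nOri
      - lcontr (ev c) Ic * Nb :=
  circle_trivector_center_radius_general c r r₁ r₂ r₃ h₁ h₂ h₃ p₁ p₂ p₃ hp₁ hp₂ hp₃ Ic hIc hin₁
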